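/- arXiv:2401.12638 — 8 statements merged into one kernel-verified Lean document; each statement's English description precedes it below -/
import Mathlib

section
/- Let C be a category with pullbacks in which the left square of a diagram of two horizontally composed squares is a stable pushout. If the outer rectangle and the left square of a second diagram sharing the same right square are pullbacks, and likewise for a third such diagram, then the common right square is itself a pullback. More precisely: given a stable pushout square (f₁ : Y → X₁, f₂ : Y → X₂, r₁ : X₁ → R, r₂ : X₂ → R), morphisms w : W → Q', r : W → R, q : Q' → Q, s : R → Q with q ∘ w = s ∘ r, and pullback squares exhibiting (x₁ : Z₁ → X₁, z₁ : Z₁ → W) as a pullback of r along r₁ with (w ∘ z₁, r₁ ∘ x₁) forming a pullback of q along s ∘ r₁ as outer rectangle, and similarly for (x₂ : Z₂ → X₂, z₂ : Z₂ → W) along r₂, then the square (r, w, s, q) is a pullback. -/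
open CategoryTheory CategoryTheory.Limits

universe v u

variable {C : Type u} [Category.{v} C]

/-- A pushout square is *stable* if every pullback of it (in the sense of a
commutative cube all of whose vertical faces are pullbacks and whose bottom
face is the given square) has a pushout as its top face. -/
def StablePushout {X Y Z W : C} (f : X ⟶ Y) (g : X ⟶ Z) (inl : Y ⟶ W) (inr : Z ⟶ W) : Prop :=
  IsPushout f g inl inr ∧
  ∀ ⦃X' Y' Z' W' : C⦄ (f' : X' ⟶ Y') (g' : X' ⟶ Z') (inl' : Y' ⟶ W') (inr' : Z' ⟶ W')
    (x : X' ⟶ X) (y : Y' ⟶ Y) (z : Z' ⟶ Z) (w : W' ⟶ W),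
    f' ≫ inl' = g' ≫ inr' →
    IsPullback f' x y f → IsPullback g' x z g →
    IsPullback inl' y w inl → IsPullback inr' z w inr →
    IsPushout f' g' inl' inr'

/-- A pushout square is a *Van Kampen square* if for every commutative cube over it
whose back and left faces (the faces over the two span legs) are pullbacks, the top
face is a pushout iff the front and right faces are pullbacks. -/
def VanKampenSquare {X Y Z W : C} (f : X ⟶ Y) (g : X ⟶ Z) (inl : Y ⟶ W) (inr : Z ⟶ W) : Prop :=
  IsPushout f g inl inr ∧
  ∀ ⦃X' Y' Z' W' : C⦄ (f' : X' ⟶ Y') (g' : X' ⟶ Z') (inl' : Y' ⟶ W') (inr' : Z' ⟶ W')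
    (x : X' ⟶ X) (y : Y' ⟶ Y) (z : Z' ⟶ Z) (w : W' ⟶ W),
    f' ≫ inl' = g' ≫ inr' →
    IsPullback f' x y f → IsPullback g' x z g →
    inl' ≫ w = y ≫ inl → inr' ≫ w = z ≫ inr →
    (IsPushout f' g' inl' inr' ↔ (IsPullback inl' y w inl ∧ IsPullback inr' z w inr))

/-- A morphism `m : X ⟶ Y` is `N`-preadhesive if for every `n : X ⟶ Z` in `N` there is
a stable pushout square of `m` along `n` which is also a pullback square. -/
def Preadhesive (N : MorphismProperty C) {X Y : C} (m : X ⟶ Y) : Prop :=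
  ∀ ⦃Z : C⦄ (n : X ⟶ Z), N n →
    ∃ (W : C) (p : Z ⟶ W) (q : Y ⟶ W),
      StablePushout n m p q ∧ IsPullback n m p q

/-- A morphism is `N`-adhesive if all of its pullbacks are `N`-preadhesive. -/
def NAdhesive (N : MorphismProperty C) {X Y : C} (m : X ⟶ Y) : Prop :=
  ∀ ⦃X' Y' : C⦄ (m' : X' ⟶ Y') (x : X' ⟶ X) (y : Y' ⟶ Y),
    IsPullback m' x y m → Preadhesive N m'

/-- A *matching class*: contains all isos, closed under composition and decomposition,
stable under pullbacks and pushouts. -/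
structure MatchingClass (N : MorphismProperty C) : Prop where
  iso_mem : ∀ ⦃X Y : C⦄ (f : X ⟶ Y), IsIso f → N f
  comp_mem : ∀ ⦃X Y Z : C⦄ (f : X ⟶ Y) (g : Y ⟶ Z), N f → N g → N (f ≫ g)
  decomp : ∀ ⦃X Y Z : C⦄ (f : X ⟶ Y) (g : Y ⟶ Z), N (f ≫ g) → N g → N f
  pullback_stable : ∀ ⦃P X Y Z : C⦄ (fst : P ⟶ X) (snd : P ⟶ Y) (f : X ⟶ Z) (g : Y ⟶ Z),
    IsPullback fst snd f g → N f → N snd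
  pushout_stable : ∀ ⦃Z X Y P : C⦄ (f : Z ⟶ X) (g : Z ⟶ Y) (inl : X ⟶ P) (inr : Y ⟶ P),
    IsPushout f g inl inr → N g → N inl

/-- A *stable system of monos*. -/
structure StableSystem (M : MorphismProperty C) : Prop where
  mono : ∀ ⦃X Y : C⦄ (f : X ⟶ Y), M f → Mono f
  iso_mem : ∀ ⦃X Y : C⦄ (f : X ⟶ Y), IsIso f → M f
  comp_mem : ∀ ⦃X Y Z : C⦄ (f : X ⟶ Y) (g : Y ⟶ Z), M f → M g → M (f ≫ g)
  pullback_stable : ∀ ⦃P X Y Z : C⦄ (fst : P ⟶ X) (snd : P ⟶ Y) (f : X ⟶ Z) (g : Y ⟶ Z),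
    IsPullback fst snd f g → M f → M snd

/-- `C` is `M`-adhesive: `M`-pullbacks exist, and pushouts along arrows of `M`
(along arbitrary morphisms) exist and are Van Kampen squares. -/
def MAdhesive (M : MorphismProperty C) : Prop :=
  (∀ ⦃X Y Z : C⦄ (m : X ⟶ Y) (g : Z ⟶ Y), M m →
    ∃ (P : C) (p : P ⟶ X) (q : P ⟶ Z), IsPullback p q m g) ∧
  (∀ ⦃X Y Z : C⦄ (m : X ⟶ Y) (f : X ⟶ Z), M m →
    ∃ (W : C) (inl : Z ⟶ W) (inr : Y ⟶ W), VanKampenSquare f m inl inr)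

/-- The class of regular monomorphisms. -/
def RegMonos (C : Type u) [Category.{v} C] : MorphismProperty C :=
  fun _ _ f => Nonempty (RegularMono f)

/-!
Let `u : W ⟶ pullback q s` be the comparison map. Pulling the stable pushout back along `r`
and along `pullback.snd q s` yields two pushouts of the same span, with legs `zᵢ` and `zᵢ ≫ u`
respectively: both use the hypotheses that the left squares and the outer rectangles are
pullbacks. A map between two pushouts of one span that is compatible with the legs is an iso,
so `W` is the pullback of `q` and `s`.
-/

theorem CategoryTheory.IsPushout.isIso_of_isPushout_comp {X Y Z P P' : C}
    {f : X ⟶ Y} {g : X ⟶ Z} {inl : Y ⟶ P} {inr : Z ⟶ P} {u : P ⟶ P'}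
    (h : IsPushout f g inl inr) (h' : IsPushout f g (inl ≫ u) (inr ≫ u)) : IsIso u := by
  rw [show u = (h.isoIsPushout Y Z h').hom from h.hom_ext (by simp) (by simp)]
  infer_instance

/-- Pulling a stable pushout back along `t`: only one of the two back faces of the cube needs to
be given as a pullback, the other one follows by pasting. -/
theorem StablePushout.isPushout_of_isPullback {Y X₁ X₂ R Y' Z₁ Z₂ T : C}
    {f₁ : Y ⟶ X₁} {f₂ : Y ⟶ X₂} {r₁ : X₁ ⟶ R} {r₂ : X₂ ⟶ R}
    (hst : StablePushout f₁ f₂ r₁ r₂) {g₁ : Y' ⟶ Z₁} {g₂ : Y' ⟶ Z₂} {y : Y' ⟶ Y}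
    {x₁ : Z₁ ⟶ X₁} {x₂ : Z₂ ⟶ X₂} {z₁ : Z₁ ⟶ T} {z₂ : Z₂ ⟶ T} {t : T ⟶ R}
    (hg : g₁ ≫ z₁ = g₂ ≫ z₂) (hg₂ : g₂ ≫ x₂ = y ≫ f₂) (hb₁ : IsPullback g₁ y x₁ f₁)
    (h₁ : IsPullback z₁ x₁ t r₁) (h₂ : IsPullback z₂ x₂ t r₂) :
    IsPushout g₁ g₂ z₁ z₂ := by
  have hb₂ : IsPullback g₂ y x₂ f₂ := by
    refine IsPullback.of_right ?_ hg₂ h₂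
    rw [← hg, ← hst.1.w]
    exact hb₁.paste_horiz h₁
  exact hst.2 g₁ g₂ z₁ z₂ y x₁ x₂ t hg hb₁ hb₂ h₁ h₂

/-- Left cancellation property for pullbacks over a stable pushout. -/
theorem stmt4 [HasPullbacks C]
    {Y X₁ X₂ R W Q' Q Z₁ Z₂ : C}
    (f₁ : Y ⟶ X₁) (f₂ : Y ⟶ X₂) (r₁ : X₁ ⟶ R) (r₂ : X₂ ⟶ R)
    (hst : StablePushout f₁ f₂ r₁ r₂)
    (x₁ : Z₁ ⟶ X₁) (z₁ : Z₁ ⟶ W) (x₂ : Z₂ ⟶ X₂) (z₂ : Z₂ ⟶ W)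
    (w : W ⟶ Q') (r : W ⟶ R) (q : Q' ⟶ Q) (s : R ⟶ Q)
    (hcomm : w ≫ q = r ≫ s)
    (h1 : IsPullback z₁ x₁ r r₁)
    (h1' : IsPullback (z₁ ≫ w) x₁ q (r₁ ≫ s))
    (h2 : IsPullback z₂ x₂ r r₂)
    (h2' : IsPullback (z₂ ≫ w) x₂ q (r₂ ≫ s)) :
    IsPullback w r q s := by
  let u : W ⟶ pullback q s := pullback.lift w r hcomm
  have hP := IsPullback.of_hasPullback q s
  have hu₁ : IsPullback (z₁ ≫ u) x₁ (pullback.snd q s) r₁ :=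
    IsPullback.of_right (by rw [Category.assoc, pullback.lift_fst]; exact h1')
      (by rw [Category.assoc, pullback.lift_snd, h1.w]) hP
  have hu₂ : IsPullback (z₂ ≫ u) x₂ (pullback.snd q s) r₂ :=
    IsPullback.of_right (by rw [Category.assoc, pullback.lift_fst]; exact h2')
      (by rw [Category.assoc, pullback.lift_snd, h2.w]) hP
  have hb₁ := IsPullback.of_hasPullback x₁ f₁
  let g₂ := h2.lift (pullback.fst x₁ f₁ ≫ z₁) (pullback.snd x₁ f₁ ≫ f₂)
    (by simp only [Category.assoc, h1.w, pullback.condition_assoc, hst.1.w])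
  have hg : pullback.fst x₁ f₁ ≫ z₁ = g₂ ≫ z₂ := (h2.lift_fst _ _ _).symm
  have hg₂ : g₂ ≫ x₂ = pullback.snd x₁ f₁ ≫ f₂ := h2.lift_snd _ _ _
  have : IsIso u :=
    (hst.isPushout_of_isPullback hg hg₂ hb₁ h1 h2).isIso_of_isPushout_comp
      (hst.isPushout_of_isPullback (by simp only [reassoc_of% hg]) hg₂ hb₁ hu₁ hu₂)
  exact IsPullback.of_iso_pullback ⟨hcomm⟩ (asIso u)
    (pullback.lift_fst _ _ _) (pullback.lift_snd _ _ _)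
end

section
/- Let N be a matching class of morphisms in a category C. If n ∈ N is N-preadhesive, then n is a regular monomorphism. -/
open CategoryTheory CategoryTheory.Limits

universe v u

variable {C : Type u} [Category.{v} C]

theorem stmt5_general (N : MorphismProperty C)
    {X Y : C} (n : X ⟶ Y) (hn : N n) (hp : Preadhesive N n) :
    Nonempty (RegularMono n) := by
  obtain ⟨W, p, q, -, hpb⟩ := hp n hn
  exact ⟨{ Z := W, left := p, right := q, w := hpb.w, isLimit := hpb.isLimitFork }⟩

/-- If `n ∈ N` is `N`-preadhesive, then `n` is a regular monomorphism. -/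
theorem stmt5 (N : MorphismProperty C) (hN : MatchingClass N)
    {X Y : C} (n : X ⟶ Y) (hn : N n) (hp : Preadhesive N n) :
    Nonempty (RegularMono n) :=
  stmt5_general N n hn hp
end

section
/- In any category C, every morphism that is Mor(C)-adhesive is a regular monomorphism. -/
open CategoryTheory CategoryTheory.Limits

universe v u

variable {C : Type u} [Category.{v} C]

section

variable {N : MorphismProperty C} {X Y : C} {m : X ⟶ Y}

theorem NAdhesive.preadhesive (h : NAdhesive N m) : Preadhesive N m :=
  h m (𝟙 X) (𝟙 Y) IsPullback.of_id_snd

/-- The pushout of `m` along itself is its cokernel pair; being also a pullback makes `m`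
the equalizer of the two coprojections. -/
theorem Preadhesive.nonempty_regularMono (h : Preadhesive N m) (hm : N m) :
    Nonempty (RegularMono m) := by
  obtain ⟨W, p, q, -, hpb⟩ := h m hm
  exact ⟨⟨W, p, q, hpb.w, hpb.isLimitFork⟩⟩

end

/-- Every `Mor(C)`-adhesive morphism is a regular monomorphism. -/
theorem stmt8 {X Y : C} (m : X ⟶ Y)
    (h : NAdhesive (⊤ : MorphismProperty C) m) :
    Nonempty (RegularMono m) :=
  h.preadhesive.nonempty_regularMono trivial
end

section
/- Let N be a matching class in a category C with pullbacks, and consider a pushout square of n : X → Z in N along a monomorphism m₁ : X → Y that is N-adhesive, yielding m₂ : Z → W and g : Y → W. Then m₂ is a monomorphism and m₂ is N-adhesive. -/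
open CategoryTheory CategoryTheory.Limits

universe v u

variable {C : Type u} [Category.{v} C]

lemma isPullback_of_exists {P X Y Z : C} {fst : P ⟶ X} {snd : P ⟶ Y} {f : X ⟶ Z} {g : Y ⟶ Z}
    (comm : fst ≫ f = snd ≫ g)
    (uniq : ∀ {T : C} (r s : T ⟶ P), r ≫ fst = s ≫ fst → r ≫ snd = s ≫ snd → r = s)
    (ex : ∀ {T : C} (a : T ⟶ X) (b : T ⟶ Y), a ≫ f = b ≫ g →
      ∃ r : T ⟶ P, r ≫ fst = a ∧ r ≫ snd = b) :
    IsPullback fst snd f g := by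
  have h := IsPullback.of_isLimit (PullbackCone.IsLimit.mk comm
    (fun s => (ex s.fst s.snd s.condition).choose)
    (fun s => (ex s.fst s.snd s.condition).choose_spec.1)
    (fun s => (ex s.fst s.snd s.condition).choose_spec.2)
    (fun s m h₁ h₂ => uniq _ _ (by rw [h₁, (ex s.fst s.snd s.condition).choose_spec.1])
      (by rw [h₂, (ex s.fst s.snd s.condition).choose_spec.2])))
  exact h

lemma mono_fst_of_isPullback {P X Y Z : C} {fst : P ⟶ X} {snd : P ⟶ Y} {f : X ⟶ Z} {g : Y ⟶ Z}
    (h : IsPullback fst snd f g) (hg : Mono g) : Mono fst := by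
  constructor
  intro T r s hrs
  refine h.hom_ext hrs ?_
  rw [← cancel_mono g, Category.assoc, Category.assoc, ← h.w,
    ← Category.assoc, hrs, Category.assoc]

lemma isPullback_comp_iso {P X Y Z Z' : C} {fst : P ⟶ X} {snd : P ⟶ Y} {f : X ⟶ Z} {g : Y ⟶ Z}
    (h : IsPullback fst snd f g) (e : Z ⟶ Z') [IsIso e] :
    IsPullback fst snd (f ≫ e) (g ≫ e) := by
  refine isPullback_of_exists ?_ (fun r s h1 h2 => h.hom_ext h1 h2) ?_
  · rw [← Category.assoc, h.w, Category.assoc]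
  · intro T a b w
    have w' : a ≫ f = b ≫ g := by
      rw [← cancel_mono e, Category.assoc, Category.assoc]
      simpa [Category.assoc] using w
    exact ⟨h.lift a b w', h.lift_fst a b w', h.lift_snd a b w'⟩

lemma isPullback_cancel_iso {P X Y Z Z' : C} {fst : P ⟶ X} {snd : P ⟶ Y} {f : X ⟶ Z} {g : Y ⟶ Z}
    (e : Z ⟶ Z') [IsIso e] (h : IsPullback fst snd (f ≫ e) (g ≫ e)) : IsPullback fst snd f g := by
  have h2 := isPullback_comp_iso h (inv e)
  simpa using h2

lemma mono_of_stablePushout [HasPullbacks C] {A B D E : C} {f : A ⟶ B} {m : A ⟶ D}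
    {p : B ⟶ E} {q : D ⟶ E} [Mono m] (hsp : StablePushout f m p q)
    (hpb : IsPullback f m p q) : Mono p := by
  have hK : IsPullback (pullback.fst p p) (pullback.snd p p) p p := IsPullback.of_hasPullback p p
  set k₁ := pullback.fst p p with hk₁
  set k₂ := pullback.snd p p with hk₂
  have hP : IsPullback (pullback.fst k₂ f) (pullback.snd k₂ f) k₂ f :=
    IsPullback.of_hasPullback k₂ f
  set u := pullback.fst k₂ f with hu
  set v := pullback.snd k₂ f with hv
  have w1 : (u ≫ k₁) ≫ p = (v ≫ m) ≫ q := by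
    rw [Category.assoc, hK.w, ← Category.assoc, hP.w, Category.assoc, hpb.w, Category.assoc]
  -- the induced map P ⟶ A equals v, giving u ≫ k₁ = v ≫ f
  have hgt : ∃ gt : pullback k₂ f ⟶ A, gt ≫ f = u ≫ k₁ ∧ gt ≫ m = v ≫ m :=
    ⟨hpb.lift _ _ w1, hpb.lift_fst _ _ w1, hpb.lift_snd _ _ w1⟩
  obtain ⟨gt, hgt1, hgt2⟩ := hgt
  have hgv : gt = v := (cancel_mono m).1 hgt2
  have hcomm : u ≫ k₁ = v ≫ f := by rw [← hgt1, hgv]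
  -- the face over m is a pullback
  have hbig : IsPullback (u ≫ k₁) v p (f ≫ p) := hP.paste_horiz hK
  have hbig' : IsPullback (gt ≫ f) v p (m ≫ q) := by
    rw [hgt1]; rwa [← hpb.w]
  have hface : IsPullback gt v m m := hbig'.of_right hgt2 hpb
  rw [hgv] at hface
  -- v is mono and split epi, hence iso
  have hvmono : Mono v := mono_fst_of_isPullback hface ‹Mono m›
  have hδ : ∃ δ : B ⟶ pullback p p, δ ≫ k₁ = 𝟙 B ∧ δ ≫ k₂ = 𝟙 B :=
    ⟨hK.lift (𝟙 B) (𝟙 B) rfl, hK.lift_fst _ _ rfl, hK.lift_snd _ _ rfl⟩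
  obtain ⟨δ, hδ1, hδ2⟩ := hδ
  have we : (f ≫ δ) ≫ k₂ = 𝟙 A ≫ f := by rw [Category.assoc, hδ2]; simp
  have he : ∃ e : A ⟶ pullback k₂ f, e ≫ u = f ≫ δ ∧ e ≫ v = 𝟙 A :=
    ⟨hP.lift _ _ we, hP.lift_fst _ _ we, hP.lift_snd _ _ we⟩
  obtain ⟨e, he1, he2⟩ := he
  have hviso : IsIso v := by
    refine ⟨e, ?_, he2⟩
    rw [← cancel_mono v, Category.assoc, he2, Category.comp_id, Category.id_comp]
  -- stability gives the pushout (u, v, k₁, f)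
  have hpo' : IsPushout u v k₁ f := hsp.2 u v k₁ f v k₂ m p hcomm hP hface hK hpb
  have wψ : u ≫ 𝟙 (pullback p p) = v ≫ (inv v ≫ u) := by simp
  set ψ := hpo'.desc (𝟙 (pullback p p)) (inv v ≫ u) wψ with hψ
  have hψ1 : k₁ ≫ ψ = 𝟙 (pullback p p) := hpo'.inl_desc _ _ wψ
  have hψ2 : f ≫ ψ = inv v ≫ u := hpo'.inr_desc _ _ wψ
  -- ψ = δ and ψ is a two-sided inverse to k₁
  have hψδ : ψ = δ := by
    rw [← Category.id_comp ψ, ← hδ1, Category.assoc, hψ1, Category.comp_id]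
  have hkk : k₁ = k₂ := by
    have h5 : (k₁ ≫ ψ) ≫ k₂ = k₂ := by rw [hψ1, Category.id_comp]
    rw [Category.assoc, hψδ, hδ2, Category.comp_id] at h5
    exact h5
  constructor
  intro T r s hrs
  have hl : ∃ l : T ⟶ pullback p p, l ≫ k₁ = r ∧ l ≫ k₂ = s :=
    ⟨hK.lift r s hrs, hK.lift_fst _ _ hrs, hK.lift_snd _ _ hrs⟩
  obtain ⟨l, hl1, hl2⟩ := hl
  rw [← hl1, ← hl2, hkk]


/-- Pushing out `n ∈ N` along an `N`-adhesive monomorphism yields an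
`N`-adhesive monomorphism. -/
theorem stmt9 [HasPullbacks C] (N : MorphismProperty C) (hN : MatchingClass N)
    {X Y Z W : C} (n : X ⟶ Z) (m₁ : X ⟶ Y) (m₂ : Z ⟶ W) (g : Y ⟶ W)
    (hn : N n) [Mono m₁] (hm : NAdhesive N m₁)
    (hpo : IsPushout n m₁ m₂ g) :
    Mono m₂ ∧ NAdhesive N m₂ := by
  -- Step 1: the given square is a stable pushout and a pullback.
  have hid : IsPullback m₁ (𝟙 X) (𝟙 Y) m₁ := IsPullback.of_vert_isIso ⟨by simp⟩
  obtain ⟨W₀, p₀, q₀, hsp₀, hpb₀⟩ := hm m₁ (𝟙 X) (𝟙 Y) hid n hn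
  set e := hsp₀.1.desc m₂ g hpo.w with he
  have he1 : p₀ ≫ e = m₂ := hsp₀.1.inl_desc _ _ hpo.w
  have he2 : q₀ ≫ e = g := hsp₀.1.inr_desc _ _ hpo.w
  set e' := hpo.desc p₀ q₀ hsp₀.1.w with he'
  have he'1 : m₂ ≫ e' = p₀ := hpo.inl_desc _ _ hsp₀.1.w
  have he'2 : g ≫ e' = q₀ := hpo.inr_desc _ _ hsp₀.1.w
  have hee' : e ≫ e' = 𝟙 W₀ := by
    refine hsp₀.1.hom_ext ?_ ?_
    · rw [← Category.assoc, he1, he'1, Category.comp_id]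
    · rw [← Category.assoc, he2, he'2, Category.comp_id]
  have he'e : e' ≫ e = 𝟙 W := by
    refine hpo.hom_ext ?_ ?_
    · rw [← Category.assoc, he'1, he1, Category.comp_id]
    · rw [← Category.assoc, he'2, he2, Category.comp_id]
  haveI : IsIso e := ⟨e', hee', he'e⟩
  have hpb : IsPullback n m₁ m₂ g := by
    rw [← he1, ← he2]; exact isPullback_comp_iso hpb₀ e
  have hsp : StablePushout n m₁ m₂ g := by
    refine ⟨hpo, ?_⟩
    intro X₁ Y₁ Z₁ W₁ f' g' inl' inr' x1 y1 z1 w1 comm h1 h2 h3 h4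
    have hw1 : (w1 ≫ e') ≫ e = w1 := by rw [Category.assoc, he'e, Category.comp_id]
    refine hsp₀.2 f' g' inl' inr' x1 y1 z1 (w1 ≫ e') comm h1 h2 ?_ ?_
    · refine isPullback_cancel_iso e ?_
      rw [hw1, he1]; exact h3
    · refine isPullback_cancel_iso e ?_
      rw [hw1, he2]; exact h4
  have hmono : Mono m₂ := mono_of_stablePushout hsp hpb
  refine ⟨hmono, ?_⟩
  -- Adhesivity: every pullback of m₂ is preadhesive.
  intro X' Y' m' xx yy hm'
  have hQ : IsPullback (pullback.fst yy g) (pullback.snd yy g) yy g :=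
    IsPullback.of_hasPullback yy g
  set inr' := pullback.fst yy g with hinr'
  set zv := pullback.snd yy g with hzvdef
  have hR : IsPullback (pullback.fst xx n) (pullback.snd xx n) xx n :=
    IsPullback.of_hasPullback xx n
  set f'' := pullback.fst xx n with hf''
  set xv := pullback.snd xx n with hxvdef
  have wg' : (f'' ≫ m') ≫ yy = (xv ≫ m₁) ≫ g := by
    simp only [Category.assoc]
    rw [hm'.w, reassoc_of% hR.w, hpo.w]
  obtain ⟨g', hg'1, hg'2⟩ : ∃ g' : pullback xx n ⟶ pullback yy g,
      g' ≫ inr' = f'' ≫ m' ∧ g' ≫ zv = xv ≫ m₁ :=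
    ⟨hQ.lift _ _ wg', hQ.lift_fst _ _ wg', hQ.lift_snd _ _ wg'⟩
  have hg'm₁ : IsPullback g' xv zv m₁ := by
    have hcomp : IsPullback (f'' ≫ m') xv yy (n ≫ m₂) := hR.paste_horiz hm'
    rw [← hg'1, hpo.w] at hcomp
    exact hcomp.of_right hg'2 hQ
  have hNf'' : N f'' := hN.pullback_stable xv f'' n xx hR.flip hn
  have hMg' : Mono g' := mono_fst_of_isPullback hg'm₁ ‹Mono m₁›
  have hMm' : Mono m' := mono_fst_of_isPullback hm' hmono
  have htopPO : IsPushout f'' g' m' inr' :=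
    hsp.2 f'' g' m' inr' xv xx zv yy hg'1.symm hR hg'm₁ hm' hQ
  have htopPB : IsPullback f'' g' m' inr' := by
    refine isPullback_of_exists hg'1.symm ?_ ?_
    · intro T r s h1 h2
      have hxv2 : r ≫ xv = s ≫ xv := by
        refine hpb.hom_ext ?_ ?_
        · simp only [Category.assoc]
          rw [← hR.w, reassoc_of% h1]
        · simp only [Category.assoc]
          rw [← hg'2, reassoc_of% h2]
      exact hR.hom_ext h1 hxv2
    · intro T sX sQ w
      have wh : (sX ≫ xx) ≫ m₂ = (sQ ≫ zv) ≫ g := by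
        simp only [Category.assoc]
        rw [← hm'.w, reassoc_of% w, hQ.w]
      obtain ⟨h, hh1, hh2⟩ : ∃ h : T ⟶ X, h ≫ n = sX ≫ xx ∧ h ≫ m₁ = sQ ≫ zv :=
        ⟨hpb.lift _ _ wh, hpb.lift_fst _ _ wh, hpb.lift_snd _ _ wh⟩
      obtain ⟨r, hr1, hr2⟩ : ∃ r : T ⟶ pullback xx n, r ≫ f'' = sX ∧ r ≫ xv = h :=
        ⟨hR.lift sX h hh1.symm, hR.lift_fst _ _ _, hR.lift_snd _ _ _⟩
      refine ⟨r, hr1, ?_⟩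
      refine hQ.hom_ext ?_ ?_
      · simp only [Category.assoc]
        rw [hg'1, reassoc_of% hr1, w]
      · simp only [Category.assoc]
        rw [hg'2, reassoc_of% hr2, hh2]
  have htopStable : StablePushout f'' g' m' inr' := by
    refine ⟨htopPO, ?_⟩
    intro X₁ Y₁ Z₁ W₁ fc gc ic jc xc yc zc wc comm h1 h2 h3 h4
    exact hsp.2 fc gc ic jc (xc ≫ xv) (yc ≫ xx) (zc ≫ zv) (wc ≫ yy) comm
      (h1.paste_vert hR) (h2.paste_vert hg'm₁) (h3.paste_vert hm') (h4.paste_vert hQ)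
  -- Preadhesivity of m'
  intro Z'' n' hn'
  obtain ⟨V, pp, qq, hOsp, hOpb⟩ := hm g' xv zv hg'm₁ (f'' ≫ n') (hN.comp_mem f'' n' hNf'' hn')
  have hOpo : IsPushout (f'' ≫ n') g' pp qq := hOsp.1
  have wq : f'' ≫ n' ≫ pp = g' ≫ qq := by rw [← Category.assoc]; exact hOpo.w
  set qc := htopPO.desc (n' ≫ pp) qq wq with hqcdef
  have hqc1 : m' ≫ qc = n' ≫ pp := htopPO.inl_desc _ _ wq
  have hqc2 : inr' ≫ qc = qq := htopPO.inr_desc _ _ wq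
  have hPO : IsPushout n' m' pp qc := by
    have hs : IsPushout (f'' ≫ n') g' pp (inr' ≫ qc) := by rw [hqc2]; exact hOpo
    exact hs.of_left hqc1.symm htopPO
  haveI : Mono g' := hMg'
  have hMp : Mono pp := mono_of_stablePushout hOsp hOpb
  have hPB : IsPullback n' m' pp qc := by
    refine isPullback_of_exists hqc1.symm ?_ ?_
    · intro T r s h1 h2
      exact (cancel_mono m').1 h2
    · intro T s t w
      have hY2 : IsPullback (pullback.fst t m') (pullback.snd t m') t m' :=
        IsPullback.of_hasPullback t m'
      set i₁ := pullback.fst t m' with hi₁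
      set y₁ := pullback.snd t m' with hy₁
      have hZ2 : IsPullback (pullback.fst t inr') (pullback.snd t inr') t inr' :=
        IsPullback.of_hasPullback t inr'
      set j₁ := pullback.fst t inr' with hj₁
      set z₁ := pullback.snd t inr' with hz₁
      have hX2 : IsPullback (pullback.fst y₁ f'') (pullback.snd y₁ f'') y₁ f'' :=
        IsPullback.of_hasPullback y₁ f''
      set a₁ := pullback.fst y₁ f'' with ha₁
      set x₁ := pullback.snd y₁ f'' with hx₁
      have wb : (a₁ ≫ i₁) ≫ t = (x₁ ≫ g') ≫ inr' := by
        simp only [Category.assoc]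
        rw [hY2.w, reassoc_of% hX2.w, hg'1]
      obtain ⟨b₁, hb1, hb2⟩ : ∃ b₁, b₁ ≫ j₁ = a₁ ≫ i₁ ∧ b₁ ≫ z₁ = x₁ ≫ g' :=
        ⟨hZ2.lift _ _ wb, hZ2.lift_fst _ _ wb, hZ2.lift_snd _ _ wb⟩
      have hb : IsPullback b₁ x₁ z₁ g' := by
        have hcomp : IsPullback (a₁ ≫ i₁) x₁ t (f'' ≫ m') := hX2.paste_horiz hY2
        rw [← hb1, ← hg'1] at hcomp
        exact hcomp.of_right hb2 hZ2
      have hT : IsPushout a₁ b₁ i₁ j₁ :=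
        htopStable.2 a₁ b₁ i₁ j₁ x₁ y₁ z₁ t hb1.symm hX2 hb hY2 hZ2
      have hisy : i₁ ≫ s = y₁ ≫ n' := by
        rw [← cancel_mono pp]
        simp only [Category.assoc]
        rw [w, ← hqc1, reassoc_of% hY2.w]
      have wo : (j₁ ≫ s) ≫ pp = z₁ ≫ qq := by
        simp only [Category.assoc]
        rw [w, reassoc_of% hZ2.w, hqc2]
      obtain ⟨ω, hω1, hω2⟩ : ∃ ω, ω ≫ (f'' ≫ n') = j₁ ≫ s ∧ ω ≫ g' = z₁ :=
        ⟨hOpb.lift _ _ wo, hOpb.lift_fst _ _ wo, hOpb.lift_snd _ _ wo⟩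
      have hbω : b₁ ≫ ω = x₁ := by
        refine hOpb.hom_ext ?_ ?_
        · simp only [Category.assoc]
          rw [hω1, reassoc_of% hb1, hisy, reassoc_of% hX2.w]
        · rw [Category.assoc, hω2, hb2]
      have wr : a₁ ≫ y₁ = b₁ ≫ ω ≫ f'' := by
        rw [← Category.assoc, hbω, hX2.w]
      set r := hT.desc y₁ (ω ≫ f'') wr with hrdef
      have hr1 : i₁ ≫ r = y₁ := hT.inl_desc _ _ wr
      have hr2 : j₁ ≫ r = ω ≫ f'' := hT.inr_desc _ _ wr
      refine ⟨r, ?_, ?_⟩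
      · refine hT.hom_ext ?_ ?_
        · rw [← Category.assoc, hr1]; exact hisy.symm
        · rw [← Category.assoc, hr2, Category.assoc]; exact hω1
      · refine hT.hom_ext ?_ ?_
        · rw [← Category.assoc, hr1]; exact hY2.w.symm
        · rw [← Category.assoc, hr2, Category.assoc, ← hg'1, ← Category.assoc, hω2]
          exact hZ2.w.symm
  have hStable : StablePushout n' m' pp qc := by
    refine ⟨hPO, ?_⟩
    intro A₁ B₁ C₁ D₁ f₂ g₂ inl₂ inr₂ xa yb zc wd comm2 h1 h2 h3 h4
    have hC2 : IsPullback (pullback.fst zc inr') (pullback.snd zc inr') zc inr' :=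
      IsPullback.of_hasPullback zc inr'
    set γ₁ := pullback.fst zc inr' with hγ₁
    set γ₂ := pullback.snd zc inr' with hγ₂
    have hA2 : IsPullback (pullback.fst xa f'') (pullback.snd xa f'') xa f'' :=
      IsPullback.of_hasPullback xa f''
    set α₁ := pullback.fst xa f'' with hα₁
    set α₂ := pullback.snd xa f'' with hα₂
    have wgA : (α₁ ≫ g₂) ≫ zc = (α₂ ≫ g') ≫ inr' := by
      simp only [Category.assoc]
      rw [h2.w, reassoc_of% hA2.w, hg'1]
    obtain ⟨gA, hgA1, hgA2⟩ : ∃ gA, gA ≫ γ₁ = α₁ ≫ g₂ ∧ gA ≫ γ₂ = α₂ ≫ g' :=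
      ⟨hC2.lift _ _ wgA, hC2.lift_fst _ _ wgA, hC2.lift_snd _ _ wgA⟩
    have hgA : IsPullback gA α₂ γ₂ g' := by
      have hcomp : IsPullback (α₁ ≫ g₂) α₂ zc (f'' ≫ m') := hA2.paste_horiz h2
      rw [← hgA1, ← hg'1] at hcomp
      exact hcomp.of_right hgA2 hC2
    have hL : IsPushout α₁ gA g₂ γ₁ :=
      htopStable.2 α₁ gA g₂ γ₁ α₂ xa γ₂ zc hgA1.symm hA2 hgA h2 hC2
    have hf2 : IsPullback (α₁ ≫ f₂) α₂ yb (f'' ≫ n') := hA2.paste_horiz h1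
    have hq4 : IsPullback (γ₁ ≫ inr₂) γ₂ wd qq := by
      have h5 := hC2.paste_horiz h4
      rwa [hqc2] at h5
    have hcomm3 : (α₁ ≫ f₂) ≫ inl₂ = gA ≫ γ₁ ≫ inr₂ := by
      simp only [Category.assoc]
      rw [comm2, reassoc_of% hgA1]
    have hBig : IsPushout (α₁ ≫ f₂) gA inl₂ (γ₁ ≫ inr₂) :=
      hOsp.2 (α₁ ≫ f₂) gA inl₂ (γ₁ ≫ inr₂) α₂ yb γ₂ wd hcomm3 hf2 hgA h3 hq4
    exact hBig.of_left comm2 hL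
  exact ⟨V, pp, qc, hStable, hPB⟩
end

section
/- Let N be a matching class in a category C with pullbacks, m : M → X an N-adhesive monomorphism and n : N → X a monomorphism in N. Form the pullback P of m and n, and the pushout U of the two projections P → M and P → N. Then the induced morphism u : U → X is a monomorphism, and in the poset of subobjects of X, [u] is the join (supremum) of [m] and [n]. -/
open CategoryTheory CategoryTheory.Limits

universe v u

variable {C : Type u} [Category.{v} C]

/-! Let `W` be a stable pushout of `M ← P → B` (with `P = M ×_X B`) and `d : W ⟶ X` the induced
map. Pulling the pushout back along the pullback of `m` by `d` gives a pushout of `P ⟶ M` along an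
identity, so `M` itself is the pullback of `d` along `m`; symmetrically for `n`. If `a b : K ⟶ W`
agree after `d`, pulling the pushout back along `a` gives a pushout over `K` whose two legs factor
through `M` and `B`, where `a` and `b` then agree; hence `d` is mono. `N`-adhesivity of `m`
provides such a stable pushout, and it is isomorphic to `U`. -/

theorem CategoryTheory.IsPullback.eq_comp_fst_of_comp_eq {P X Z T : C}
    {fst : P ⟶ X} {f : X ⟶ Z} {g : P ⟶ Z}
    (h : IsPullback fst (𝟙 P) f g) {v : T ⟶ X} {k : T ⟶ P} (hvk : v ≫ f = k ≫ g) :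
    v = k ≫ fst := by
  have hl : h.lift v k hvk = k := by simpa using h.lift_snd v k hvk
  exact (h.lift_fst v k hvk).symm.trans (by rw [hl])

namespace StablePushout

variable {X Y Z W : C} {f : X ⟶ Y} {g : X ⟶ Z} {inl : Y ⟶ W} {inr : Z ⟶ W}

theorem flip (h : StablePushout f g inl inr) : StablePushout g f inr inl :=
  ⟨h.1.flip, fun _ _ _ _ _ _ _ _ _ _ _ _ comm hf hg hinl hinr =>
    (h.2 _ _ _ _ _ _ _ _ comm.symm hg hf hinr hinl).flip⟩

theorem exists_isPushout_of_isPullback (h : StablePushout f g inl inr) {K Y' Z' : C}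
    {w : K ⟶ W} {y : Y' ⟶ Y} {z : Z' ⟶ Z} {inl' : Y' ⟶ K} {inr' : Z' ⟶ K}
    (hY : IsPullback inl' y w inl) (hZ : IsPullback inr' z w inr) [HasPullback y f] :
    ∃ (X' : C) (f' : X' ⟶ Y') (g' : X' ⟶ Z'), IsPushout f' g' inl' inr' := by
  have hX := IsPullback.of_hasPullback y f
  have hXK : IsPullback (pullback.fst y f ≫ inl') (pullback.snd y f) w (g ≫ inr) := by
    rw [← h.1.w]
    exact hX.paste_horiz hY
  exact ⟨_, _, _, h.2 _ _ inl' inr' _ y z w (hZ.lift_fst _ _ _).symm hX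
    (hXK.of_right' hZ) hY hZ⟩

theorem isPullback_inl {T : C} {m : Y ⟶ T} {n : Z ⟶ T} [Mono m] (hpb : IsPullback f g m n)
    (h : StablePushout f g inl inr) {d : W ⟶ T} (hm : inl ≫ d = m) (hn : inr ≫ d = n)
    [HasPullback d m] : IsPullback inl (𝟙 Y) d m := by
  have : Mono g := hpb.mono_snd_of_mono
  have hr := (IsPullback.of_hasPullback d m).flip
  have hs : IsPullback (𝟙 Y) (𝟙 Y) m (inl ≫ d) := hm ▸ IsKernelPair.id_of_mono m
  have ht : IsPullback f g m (inr ≫ d) := hn ▸ hpb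
  let s := hr.lift (𝟙 Y) (𝟙 Y ≫ inl) (by simp [hm])
  let t := hr.lift f (g ≫ inr) (by simp [hn, hpb.w])
  have hst : f ≫ s = 𝟙 X ≫ t := hr.hom_ext (by simp [s, t]) (by simp [s, t, h.1.w])
  -- stability makes `s : Y ⟶ W ×_T Y` a pushout of `𝟙 X`, hence an isomorphism
  have hpo := h.2 f (𝟙 X) s t (𝟙 X) (𝟙 Y) g _ hst (.of_vert_isIso ⟨by simp⟩)
    (IsKernelPair.id_of_mono g) (hs.of_right' hr) (ht.of_right' hr)
  have := hpo.isIso_inl_of_isIso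
  exact hr.flip.of_iso' (asIso s) (Iso.refl _) (Iso.refl _) (Iso.refl _)
    (by simp [s]) (by simp [s]) (by simp) (by simp)

theorem mono_of_isPullback [HasPullbacks C] {T : C} {m : Y ⟶ T} {n : Z ⟶ T} [Mono m] [Mono n]
    (hpb : IsPullback f g m n) (h : StablePushout f g inl inr) {d : W ⟶ T}
    (hm : inl ≫ d = m) (hn : inr ≫ d = n) : Mono d := by
  have hinl := h.isPullback_inl hpb hm hn
  have hinr := h.flip.isPullback_inl hpb.flip hn hm
  refine ⟨fun a b hab => ?_⟩
  obtain ⟨_, _, _, hK⟩ := h.exists_isPushout_of_isPullback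
    (.of_hasPullback a inl) (.of_hasPullback a inr)
  refine hK.hom_ext ?_ ?_
  · rw [pullback.condition]
    exact (hinl.eq_comp_fst_of_comp_eq (by simp [← hab, pullback.condition_assoc, hm])).symm
  · rw [pullback.condition]
    exact (hinr.eq_comp_fst_of_comp_eq (by simp [← hab, pullback.condition_assoc, hn])).symm

end StablePushout

/-- The pushout over the pullback of an `N`-adhesive mono `m` and a mono `n ∈ N`
gives a mono which is the join of `[m]` and `[n]` in the subobject poset. -/
theorem stmt10 [HasPullbacks C] (N : MorphismProperty C) (hN : MatchingClass N)
    {M B X P U : C}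
    (m : M ⟶ X) (n : B ⟶ X) [Mono m] [Mono n]
    (hm : NAdhesive N m) (hn : N n)
    (p₁ : P ⟶ M) (p₂ : P ⟶ B) (hpb : IsPullback p₁ p₂ m n)
    (u₂ : M ⟶ U) (u₁ : B ⟶ U) (hpo : IsPushout p₁ p₂ u₂ u₁)
    (u : U ⟶ X) (hu₂ : u₂ ≫ u = m) (hu₁ : u₁ ≫ u = n) :
    Mono u ∧
      ∀ {K : C} (k : K ⟶ X), Mono k →
        (∃ a : M ⟶ K, a ≫ k = m) → (∃ b : B ⟶ K, b ≫ k = n) →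
        ∃ c : U ⟶ K, c ≫ k = u := by
  -- `p₂` is a pullback of `m`, hence `N`-preadhesive, and `p₁` is a pullback of `n`, hence in `N`.
  obtain ⟨W, inl, inr, hsp, -⟩ :=
    hm p₂ p₁ n hpb.flip p₁ (hN.pullback_stable p₂ p₁ n m hpb.flip hn)
  let e : W ≅ U := hsp.1.isoIsPushout _ _ hpo
  refine ⟨?_, fun k hk ⟨a, ha⟩ ⟨b, hb⟩ => ?_⟩
  · have : Mono (e.hom ≫ u) := hsp.mono_of_isPullback hpb (by simp [e, hu₂]) (by simp [e, hu₁])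
    simpa using (inferInstance : Mono (e.inv ≫ e.hom ≫ u))
  · have hab : p₁ ≫ a = p₂ ≫ b := by
      rw [← cancel_mono k]
      simp [ha, hb, hpb.w]
    exact ⟨hpo.desc a b hab, hpo.hom_ext (by simp [ha, hu₂]) (by simp [hb, hu₁])⟩
end

section
/- Consider a commutative cube in a category C with pullbacks whose left, back, bottom, and top faces are pullbacks, whose top face is a stable pushout, and such that the two morphisms forming the front-facing edges of the top and bottom faces (p' and p) are monomorphisms. Then the right face of the cube is a pullback. -/
/-!
The right face is a pullback iff the comparison map `u : Z' ⟶ Z ×_W W'` is invertible. Since `p`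
is mono, so is `l : Z ×_W W' ⟶ W'`, and pulling the top face back along `l` leaves `X'` and `Z'`
unchanged, while by pasting the left and bottom faces the corner over `Y'` is `X'` as well. By
stability the pulled-back square, which has an identity edge, is a pushout with `u` as the edge
opposite that identity, so `u` is an isomorphism.
-/

open CategoryTheory CategoryTheory.Limits

universe v u

variable {C : Type u} [Category.{v} C]

theorem StablePushout.isIso_of_fac {X Y Z W V : C} {f : X ⟶ Y} {g : X ⟶ Z} {inl : Y ⟶ W}
    {inr : Z ⟶ W} (h : StablePushout f g inl inr) (u : Y ⟶ V) (l : V ⟶ W) [Mono l]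
    (hu : u ≫ l = inl) (hX : IsPullback (f ≫ u) g l inr) : IsIso u := by
  have : Mono g := hX.mono_snd_of_mono
  have hpo : IsPushout f (𝟙 X) u (f ≫ u) :=
    h.2 f (𝟙 X) u (f ≫ u) (𝟙 X) (𝟙 Y) g l (Category.id_comp _).symm IsPullback.of_id_snd
      (IsKernelPair.id_of_mono g)
      (hu ▸ IsPullback.of_vert_isIso_mono ⟨(Category.id_comp _).symm⟩) hX
  exact hpo.isIso_inl_of_isIso

theorem stmt12_general [HasPullbacks C]
    {X Y Z W X' Y' Z' W' : C}
    (n : X ⟶ Z) (m : X ⟶ Y) (p : Z ⟶ W) (q : Y ⟶ W)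
    (n' : X' ⟶ Z') (m' : X' ⟶ Y') (p' : Z' ⟶ W') (q' : Y' ⟶ W')
    (x : X' ⟶ X) (y : Y' ⟶ Y) (z : Z' ⟶ Z) (w : W' ⟶ W)
    (hleft : IsPullback m' x y m)
    (hback : IsPullback n' x z n)
    (hbot : IsPullback n m p q)
    (htoppo : StablePushout n' m' p' q')
    (hfront : q' ≫ w = y ≫ q)
    (hright : p' ≫ w = z ≫ p)
    [Mono p] :
    IsPullback p' z w p := by
  have hV := IsPullback.of_hasPullback p w
  let u : Z' ⟶ pullback p w := pullback.lift z p' hright.symm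
  have hX : IsPullback (n' ≫ u) m' (pullback.snd p w) q' := by
    refine (IsPullback.of_bot ?_ ?_ hV.flip).flip
    · simpa only [Category.assoc, pullback.lift_fst, hback.w, hfront, u]
        using hleft.paste_vert hbot.flip
    · simp only [Category.assoc, pullback.lift_snd, htoppo.1.w, u]
  have : IsIso u := htoppo.isIso_of_fac u _ (pullback.lift_snd _ _ _) hX
  exact hV.flip.of_iso' (asIso u) (Iso.refl _) (Iso.refl _) (Iso.refl _)
    (by simpa using pullback.lift_snd _ _ _) (by simpa using pullback.lift_fst _ _ _) (by simp)
    (by simp)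

/-- In a cube whose left, back, bottom, top faces are pullbacks, whose top face
is a stable pushout and with `p`, `p'` monos, the right face is a pullback. -/
theorem stmt12 [HasPullbacks C]
    {X Y Z W X' Y' Z' W' : C}
    (n : X ⟶ Z) (m : X ⟶ Y) (p : Z ⟶ W) (q : Y ⟶ W)
    (n' : X' ⟶ Z') (m' : X' ⟶ Y') (p' : Z' ⟶ W') (q' : Y' ⟶ W')
    (x : X' ⟶ X) (y : Y' ⟶ Y) (z : Z' ⟶ Z) (w : W' ⟶ W)
    (hleft : IsPullback m' x y m)
    (hback : IsPullback n' x z n)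
    (hbot : IsPullback n m p q)
    (htop : IsPullback n' m' p' q')
    (htoppo : StablePushout n' m' p' q')
    (hfront : q' ≫ w = y ≫ q)
    (hright : p' ≫ w = z ≫ p)
    [Mono p] [Mono p'] :
    IsPullback p' z w p :=
  stmt12_general n m p q n' m' p' q' x y z w hleft hback hbot htoppo hfront hright
end

section
/- In an elementary topos, the pushout of a monomorphism m : X → Y along any morphism f : X → Z yields a monomorphism q : Z → Q, and the resulting pushout square is also a pullback square. -/
open CategoryTheory CategoryTheory.Limits

universe v u

variable {C : Type u} [Category.{v} C]

/-- A subobject classifier: a mono `t : 1 ⟶ Ω` such that every mono is a pullback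
of `t` along a unique characteristic morphism. -/
structure SubobjClassifier (C : Type u) [Category.{v} C] [HasTerminal C] where
  Ω : C
  t : ⊤_ C ⟶ Ω
  mono_t : Mono t
  χ : ∀ {M X : C} (m : M ⟶ X), Mono m → (X ⟶ Ω)
  isPullback : ∀ {M X : C} (m : M ⟶ X) (hm : Mono m),
    IsPullback (terminal.from M) m t (χ m hm)
  uniq : ∀ {M X : C} (m : M ⟶ X) (hm : Mono m) (χ' : X ⟶ Ω),
    IsPullback (terminal.from M) m t χ' → χ' = χ m hm

/-- In a topos, the pushout of a mono along any morphism is a mono and the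
pushout square is also a pullback. -/
theorem stmt14 [HasFiniteLimits C] [CartesianMonoidalCategory C] [MonoidalClosed C]
    (cls : SubobjClassifier C)
    {X Y Z Q : C} (m : X ⟶ Y) [Mono m] (f : X ⟶ Z)
    (q : Z ⟶ Q) (g : Y ⟶ Q)
    (hpo : IsPushout f m q g) :
    Mono q ∧ IsPullback f m q g := by
  open CartesianMonoidalCategory MonoidalClosed MonoidalCategory in
  -- the diagonal of `Z`
  have hδmono : Mono (lift (𝟙 Z) (𝟙 Z)) := mono_of_mono_fac (lift_fst _ _)
  set δ : Z ⟶ Z ⊗ Z := lift (𝟙 Z) (𝟙 Z) with hδ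
  set χδ : Z ⊗ Z ⟶ cls.Ω := cls.χ δ hδmono with hχδ
  -- the graph of the partial map `(m, f)`
  have hRmono : Mono (lift f m) := mono_of_mono_fac (lift_snd _ _)
  set R : X ⟶ Z ⊗ Y := lift f m with hR
  set χR : Z ⊗ Y ⟶ cls.Ω := cls.χ R hRmono with hχR
  -- the singleton map `Z ⟶ Ω^Z` is a mono
  set ψ : Z ⟶ (ihom Z).obj cls.Ω := curry χδ with hψ
  have ψmono : Mono ψ := by
    constructor
    intro T a b hab
    have h1 : (Z ◁ a) ≫ χδ = (Z ◁ b) ≫ χδ := by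
      have := congrArg uncurry hab
      rwa [uncurry_natural_left, uncurry_natural_left, uncurry_curry] at this
    have h2 : lift a (𝟙 T) ≫ (Z ◁ a) ≫ χδ = terminal.from T ≫ cls.t := by
      have : lift a (𝟙 T) ≫ (Z ◁ a) = a ≫ δ := by
        apply CartesianMonoidalCategory.hom_ext <;> simp [hδ]
      rw [reassoc_of% this, ← (cls.isPullback δ hδmono).w]
      rw [← Category.assoc]
      congr 1
      exact terminal.hom_ext _ _
    have h3 : lift a (𝟙 T) ≫ (Z ◁ b) = lift a b := by
      apply CartesianMonoidalCategory.hom_ext <;> simp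
    have h4 : terminal.from T ≫ cls.t = lift a b ≫ χδ := by
      rw [← h2, h1, reassoc_of% h3]
    set c := (cls.isPullback δ hδmono).lift (terminal.from T) (lift a b) h4 with hc
    have hcδ : c ≫ δ = lift a b := (cls.isPullback δ hδmono).lift_snd _ _ _
    have hca : c = a := by
      have := congrArg (· ≫ fst Z Z) hcδ
      simpa [hδ] using this
    have hcb : c = b := by
      have := congrArg (· ≫ snd Z Z) hcδ
      simpa [hδ] using this
    rw [← hca, ← hcb]
  -- the map `φ : Y ⟶ Ω^Z` classifying the partial map `(m, f)`
  set φ : Y ⟶ (ihom Z).obj cls.Ω := curry χR with hφ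
  -- auxiliary mono `X ⟶ Z ⊗ X`
  have hnmono : Mono (lift f (𝟙 X)) := mono_of_mono_fac (lift_snd _ _)
  set n : X ⟶ Z ⊗ X := lift f (𝟙 X) with hn
  -- two pullback squares
  have sqA : IsPullback (𝟙 X) n R (Z ◁ m) := by
    apply IsPullback.of_isLimit' ⟨by apply CartesianMonoidalCategory.hom_ext <;> simp [hR, hn]⟩
    apply PullbackCone.IsLimit.mk
    case lift => exact fun s => s.snd ≫ snd Z X
    case fac_left => intro s
                     have h := congrArg (· ≫ snd Z Y) s.condition
                     simp only [Category.assoc, hR, lift_snd, whiskerLeft_snd] at h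
                     exact ((cancel_mono m).mp (by simpa using h)).symm
    case fac_right => intro s
                      have h1 := congrArg (· ≫ fst Z Y) s.condition
                      simp only [Category.assoc, hR, lift_fst, whiskerLeft_fst] at h1
                      have h2 := congrArg (· ≫ snd Z Y) s.condition
                      simp only [Category.assoc, hR, lift_snd, whiskerLeft_snd] at h2
                      have h3 : s.fst = s.snd ≫ snd Z X :=
                        (cancel_mono m).mp (by simpa using h2)
                      apply CartesianMonoidalCategory.hom_ext <;> simp [hn, ← h3, h1]
    case uniq => intro s l hl1 hl2
                 have h2 := congrArg (· ≫ snd Z Y) s.condition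
                 simp only [Category.assoc, hR, lift_snd, whiskerLeft_snd] at h2
                 have h3 : s.fst = s.snd ≫ snd Z X :=
                   (cancel_mono m).mp (by simpa using h2)
                 simpa using hl1.trans h3
  have sqB : IsPullback f n δ (Z ◁ f) := by
    apply IsPullback.of_isLimit' ⟨by apply CartesianMonoidalCategory.hom_ext <;> simp [hδ, hn]⟩
    apply PullbackCone.IsLimit.mk
    case lift => exact fun s => s.snd ≫ snd Z X
    case fac_left => intro s
                     have h2 := congrArg (· ≫ snd Z Z) s.condition
                     simpa [hδ] using h2.symm
    case fac_right => intro s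
                      have h1 := congrArg (· ≫ fst Z Z) s.condition
                      simp only [Category.assoc, hδ, lift_fst, whiskerLeft_fst,
                        Category.comp_id] at h1
                      have h2 := congrArg (· ≫ snd Z Z) s.condition
                      simp only [Category.assoc, hδ, lift_snd, whiskerLeft_snd,
                        Category.comp_id] at h2
                      apply CartesianMonoidalCategory.hom_ext
                      · simpa [hn] using h2.symm.trans h1
                      · simp [hn]
    case uniq => intro s l hl1 hl2
                 have := congrArg (· ≫ snd Z X) hl2
                 simpa [hn] using this
  -- paste to identify both composite characteristic maps
  have pasteA : IsPullback (terminal.from X) n cls.t ((Z ◁ m) ≫ χR) := by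
    have := sqA.paste_horiz (cls.isPullback R hRmono)
    rwa [Category.id_comp] at this
  have pasteB : IsPullback (terminal.from X) n cls.t ((Z ◁ f) ≫ χδ) := by
    have := sqB.paste_horiz (cls.isPullback δ hδmono)
    rwa [terminal.hom_ext (f ≫ terminal.from Z) (terminal.from X)] at this
  have key : (Z ◁ m) ≫ χR = (Z ◁ f) ≫ χδ := by
    rw [cls.uniq n hnmono _ pasteA, cls.uniq n hnmono _ pasteB]
  -- the compatibility `f ≫ ψ = m ≫ φ`
  have compat : f ≫ ψ = m ≫ φ := by
    rw [hψ, hφ, ← curry_natural_left, ← curry_natural_left, key]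
  -- `q` is a mono since `q ≫ (pushout-induced map) = ψ` is
  have qmono : Mono q := by
    have hd : q ≫ hpo.desc ψ φ compat = ψ := hpo.inl_desc _ _ _
    have : Mono (q ≫ hpo.desc ψ φ compat) := by rw [hd]; exact ψmono
    exact mono_of_mono q (hpo.desc ψ φ compat)
  refine ⟨qmono, ?_⟩
  -- now the pullback property, using the classifier of `m`
  set χm : Y ⟶ cls.Ω := cls.χ m ‹Mono m› with hχm
  have hw : f ≫ (terminal.from Z ≫ cls.t) = m ≫ χm := by
    rw [← Category.assoc, terminal.hom_ext (f ≫ terminal.from Z) (terminal.from X)]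
    exact (cls.isPullback m ‹Mono m›).w
  set u : Q ⟶ cls.Ω := hpo.desc (terminal.from Z ≫ cls.t) χm hw with hu
  have hqu : q ≫ u = terminal.from Z ≫ cls.t := hpo.inl_desc _ _ _
  have hgu : g ≫ u = χm := hpo.inr_desc _ _ _
  apply IsPullback.of_isLimit' ⟨hpo.w⟩
  apply PullbackCone.IsLimit.mk
  case lift =>
    intro s
    refine (cls.isPullback m ‹Mono m›).lift (terminal.from s.pt) s.snd ?_
    have : s.snd ≫ χm = s.fst ≫ q ≫ u := by
      rw [← hgu, ← Category.assoc, ← s.condition, Category.assoc]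
    rw [this, hqu, ← Category.assoc,
      terminal.hom_ext (terminal.from s.pt) (s.fst ≫ terminal.from Z)]
  case fac_right =>
    intro s
    exact (cls.isPullback m ‹Mono m›).lift_snd _ _ _
  case fac_left =>
    intro s
    apply (cancel_mono q).mp
    rw [Category.assoc, hpo.w, ← Category.assoc,
      (cls.isPullback m ‹Mono m›).lift_snd _ _ _, s.condition]
  case uniq =>
    intro s l hl1 hl2
    apply (cancel_mono m).mp
    rw [hl2, ((cls.isPullback m ‹Mono m›).lift_snd _ _ _ : _)]
end

section
/- Let C be a category with pullbacks and Reg(C) the class of regular monomorphisms. Then C is quasiadhesive (pushouts along regular monos exist and are Van Kampen) if and only if Reg(C) is a stable system of monos and C is Reg(C)-adhesive. -/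
open CategoryTheory CategoryTheory.Limits

universe v u

variable {C : Type u} [Category.{v} C]

/-- A Van Kampen square whose "snd" leg is a mono is also a pullback square. -/
lemma VanKampenSquare.isPullback {X Y Z W : C} {f : X ⟶ Y} {g : X ⟶ Z}
    {inl : Y ⟶ W} {inr : Z ⟶ W} (h : VanKampenSquare f g inl inr) [Mono g] :
    IsPullback f g inl inr := by
  have key := h.2 f (𝟙 X) (𝟙 Y) f (𝟙 X) (𝟙 Y) g inl
    (by simp)
    (IsPullback.of_vert_isIso ⟨by simp⟩)
    (IsKernelPair.id_of_mono g)
    (by simp)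
    (by simpa using h.1.w)
  exact (key.mp (IsPushout.of_vert_isIso ⟨by simp⟩)).2

/-- Regular monos are stable under pullback. -/
noncomputable def regularMonoOfIsPullback {P X Y Z : C} {fst : P ⟶ X} {snd : P ⟶ Y}
    {f : X ⟶ Z} {g : Y ⟶ Z} (h : IsPullback fst snd f g) (hf : RegularMono f) :
    RegularMono snd where
  Z := hf.Z
  left := g ≫ hf.left
  right := g ≫ hf.right
  w := by
    calc snd ≫ g ≫ hf.left = (fst ≫ f) ≫ hf.left := by rw [← Category.assoc, h.w]
      _ = fst ≫ f ≫ hf.right := by rw [Category.assoc, hf.w]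
      _ = snd ≫ g ≫ hf.right := by rw [← Category.assoc, h.w, Category.assoc]
  isLimit := by
    refine Fork.IsLimit.mk' _ (fun s => ?_)
    obtain ⟨a, ha⟩ := Fork.IsLimit.lift' hf.isLimit (s.ι ≫ g) (by simpa using s.condition)
    have ha' : a ≫ f = s.ι ≫ g := ha
    refine ⟨h.lift a s.ι ha', h.lift_snd _ _ _, fun {m} hm => ?_⟩
    have hm' : m ≫ snd = s.ι := hm
    apply h.hom_ext
    · apply Fork.IsLimit.hom_ext hf.isLimit
      show (m ≫ fst) ≫ f = (h.lift a s.ι ha' ≫ fst) ≫ f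
      calc (m ≫ fst) ≫ f = m ≫ fst ≫ f := by simp only [Category.assoc]
        _ = m ≫ snd ≫ g := congrArg (fun t => m ≫ t) h.w
        _ = (m ≫ snd) ≫ g := by simp only [Category.assoc]
        _ = s.ι ≫ g := congrArg (fun t => t ≫ g) hm'
        _ = a ≫ f := ha'.symm
        _ = (h.lift a s.ι ha' ≫ fst) ≫ f := by rw [h.lift_fst]
    · rw [h.lift_snd]
      exact hm'

/-- In a quasiadhesive category regular monos are closed under composition. -/
lemma regMonos_comp_of_quasiadhesive
    (H : ∀ {X Y Z : C} (m : X ⟶ Y) (f : X ⟶ Z), Nonempty (RegularMono m) →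
      ∃ (W : C) (inl : Z ⟶ W) (inr : Y ⟶ W), VanKampenSquare f m inl inr)
    {X Y Z : C} (f : X ⟶ Y) (g : Y ⟶ Z)
    (hf : Nonempty (RegularMono f)) (hg : Nonempty (RegularMono g)) :
    Nonempty (RegularMono (f ≫ g)) := by
  haveI := isRegularMono_of_regularMono hf.some
  haveI := isRegularMono_of_regularMono hg.some
  -- cokernel pair of `f`
  obtain ⟨P, c, d, h0⟩ := H f f hf
  -- `c` is a split mono via the codiagonal
  haveI : IsSplitMono c := IsSplitMono.mk' ⟨h0.1.desc (𝟙 Y) (𝟙 Y) rfl, h0.1.inl_desc _ _ _⟩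
  -- push out `g` along `c`
  obtain ⟨Q₁, i, p₁, h1⟩ := H c g ⟨RegularMono.ofIsSplitMono c⟩
  -- push out `d ≫ p₁` along `g`
  obtain ⟨Q₂, inl₂, inr₂, h2⟩ := H g (d ≫ p₁) hg
  have hPB0 : IsPullback f f c d := h0.isPullback
  have hPB1 : IsPullback g c i p₁ := h1.isPullback
  have hPB2 : IsPullback (d ≫ p₁) g inl₂ inr₂ := h2.isPullback
  have bigPB : IsPullback (f ≫ g) (f ≫ g) (i ≫ inl₂) inr₂ :=
    (hPB0.paste_horiz hPB1).paste_vert hPB2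
  have bigPO : IsPushout (f ≫ g) (f ≫ g) (i ≫ inl₂) inr₂ :=
    (h0.1.paste_horiz h1.1).paste_vert h2.1
  refine ⟨⟨Q₂, i ≫ inl₂, inr₂, bigPO.w, ?_⟩⟩
  refine Fork.IsLimit.mk _ (fun s => ?_) (fun s => ?_) (fun s m hm => ?_)
  · exact bigPB.lift s.ι s.ι s.condition
  · exact bigPB.lift_fst _ _ _
  · have hm' : m ≫ (f ≫ g) = s.ι := hm
    apply bigPB.hom_ext
    · rw [bigPB.lift_fst]
      exact hm'
    · rw [bigPB.lift_snd]
      exact hm'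

/-- `C` is quasiadhesive (pushouts along regular monos exist and are Van Kampen)
iff regular monos form a stable system of monos and `C` is `Reg(C)`-adhesive. -/
theorem stmt18 [HasPullbacks C] :
    (∀ {X Y Z : C} (m : X ⟶ Y) (f : X ⟶ Z), Nonempty (RegularMono m) →
      ∃ (W : C) (inl : Z ⟶ W) (inr : Y ⟶ W), VanKampenSquare f m inl inr) ↔
    (StableSystem (RegMonos C) ∧ MAdhesive (RegMonos C)) := by
  constructor
  · intro H
    refine ⟨⟨?_, ?_, ?_, ?_⟩, ?_, ?_⟩
    · intro X Y f hf
      haveI := isRegularMono_of_regularMono hf.some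
      infer_instance
    · intro X Y f hf
      haveI : IsSplitMono f := IsSplitMono.mk' ⟨inv f, by simp⟩
      exact ⟨RegularMono.ofIsSplitMono f⟩
    · intro X Y Z f g hf hg
      exact regMonos_comp_of_quasiadhesive H f g hf hg
    · intro P X Y Z fst snd f g h hf
      exact ⟨regularMonoOfIsPullback h hf.some⟩
    · intro X Y Z m g _
      exact ⟨pullback m g, pullback.fst m g, pullback.snd m g, IsPullback.of_hasPullback m g⟩
    · intro X Y Z m f hm
      exact H m f hm
  · rintro ⟨-, -, hVK⟩ X Y Z m f hm
    exact hVK m f hm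
end
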